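/- Let g(z) = a·z² + b·z + c and λ ∈ ℂ with |λ| > 2|a|. Then there is a constant C (depending on m, a, b, λ) such that for every entire function f, sup_{z∈ℂ} |exp(g(z)/λ)·f(z)|·exp(−ψ_m(z)) ≤ C·( |f(0)| + sup_{z∈ℂ} |exp(g(z)/λ)|·|f'(z)|·exp(−ψ_m(z))/(1 + ψ_m'(|z|)) ). -/

import Mathlib

/-- The weight function ψ_m(z) = |z|²/2 − m·log(1+|z|). -/
noncomputable def psi (m : ℕ) (z : ℂ) : ℝ :=
  ‖z‖ ^ 2 / 2 - m * Real.log (1 + ‖z‖)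

/-- ψ_m'(r) = r − m/(1+r). -/
noncomputable def psi' (m : ℕ) (r : ℝ) : ℝ := r - m / (1 + r)

/-! With `W = Re (g / λ) - ψ_m` the claim bounds `‖f‖ e^W`. Since `‖a / λ‖ < 1/2`, `W` decays
radially: `W z - W (t z) ≤ E - ε (1 - t) ‖z‖²` for `t ∈ [0, 1]`. Where `1 + ψ_m' > 0`, in
particular off a disc, the hypothesis bounds `‖f'‖ e^W` by `S (1 + ‖z‖)`, and the maximum modulus
principle extends such a bound (with a worse constant) to the disc. Integrating `f'` along
`[0, z]`, the radial decay makes `∫₀¹ ‖z‖ (1 + ‖z‖) e^{W z - W (t z)} dt` bounded uniformly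
in `z`. -/

open Real Set Metric intervalIntegral

lemma norm_ofReal_mul {t : ℝ} (ht : 0 ≤ t) (z : ℂ) : ‖(t : ℂ) * z‖ = t * ‖z‖ := by
  rw [norm_mul, Complex.norm_real, norm_of_nonneg ht]

lemma hasDerivAt_comp_ofReal_mul {f : ℂ → ℂ} (hf : Differentiable ℂ f) (z : ℂ) (t : ℝ) :
    HasDerivAt (fun s : ℝ => f (s * z)) (deriv f (t * z) * z) t :=
  ((hf _).hasDerivAt.comp (t : ℂ) (hasDerivAt_mul_const z)).comp_ofReal

lemma norm_sub_le_integral_of_norm_deriv_mul_le {f : ℂ → ℂ} (hf : Differentiable ℂ f)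
    (z : ℂ) {B : ℝ → ℝ} (hB : Continuous B)
    (hle : ∀ t ∈ Ioo (0 : ℝ) 1, ‖deriv f (t * z) * z‖ ≤ B t) :
    ‖f z - f 0‖ ≤ ∫ t in (0 : ℝ)..1, B t := by
  have hderiv := hasDerivAt_comp_ofReal_mul hf z
  simpa using norm_sub_le_integral_of_norm_deriv_le_of_le (f := fun t : ℝ => f (t * z))
    zero_le_one (fun t _ => (hderiv t).continuousAt.continuousWithinAt)
    (fun t _ => (hderiv t).differentiableAt.differentiableWithinAt)
    (Filter.Eventually.of_forall fun t ht => (hderiv t).deriv ▸ hle t ht)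
    (hB.intervalIntegrable _ _)

lemma one_add_mul_integral_exp_neg_le {x : ℝ} (hx : 0 ≤ x) :
    (1 + x) * ∫ t in (0 : ℝ)..1, exp (-(x * (1 - t))) ≤ 2 := by
  have hcont : Continuous fun t : ℝ => exp (-(x * (1 - t))) := by fun_prop
  have hle_one : ∫ t in (0 : ℝ)..1, exp (-(x * (1 - t))) ≤ 1 := by
    simpa using integral_mono_on zero_le_one (hcont.intervalIntegrable _ _)
      (intervalIntegrable_const (μ := MeasureTheory.volume)) fun t ht =>
        exp_le_one_iff.2 (by nlinarith [ht.2] : -(x * (1 - t)) ≤ 0)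
  have hftc : x * ∫ t in (0 : ℝ)..1, exp (-(x * (1 - t))) = 1 - exp (-x) := by
    rw [← integral_const_mul,
      integral_eq_sub_of_hasDerivAt (f := fun t => exp (-(x * (1 - t))))]
    · simp
    · intro t _
      simpa [mul_comm] using (((hasDerivAt_id t).const_sub 1).const_mul x).neg.exp
    · exact (continuous_const.mul hcont).intervalIntegrable _ _
  nlinarith [exp_pos (-x)]

lemma mul_one_add_mul_integral_exp_neg_le {ε r : ℝ} (hε : 0 < ε) (hr : 0 ≤ r) :
    r * (1 + r) * ∫ t in (0 : ℝ)..1, exp (-(ε * r ^ 2 * (1 - t))) ≤ 2 * (1 + ε⁻¹) := by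
  have hamgm : 2 * r ≤ ε * r ^ 2 + ε⁻¹ := by
    have : ε * r ^ 2 + ε⁻¹ - 2 * r = (ε * r - 1) ^ 2 / ε := by field_simp; ring
    linarith [this ▸ (by positivity : 0 ≤ (ε * r - 1) ^ 2 / ε)]
  have hI0 : 0 ≤ ∫ t in (0 : ℝ)..1, exp (-(ε * r ^ 2 * (1 - t))) :=
    integral_nonneg zero_le_one fun t _ => (exp_pos _).le
  set I := ∫ t in (0 : ℝ)..1, exp (-(ε * r ^ 2 * (1 - t)))
  calc r * (1 + r) * I ≤ (1 + ε⁻¹) * ((1 + ε * r ^ 2) * I) := by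
        rw [← mul_assoc]; gcongr ?_ * _; nlinarith [mul_inv_cancel₀ hε.ne']
    _ ≤ (1 + ε⁻¹) * 2 := by gcongr; exact one_add_mul_integral_exp_neg_le (by positivity)
    _ = 2 * (1 + ε⁻¹) := mul_comm _ _

def HasRadialDecay (W : ℂ → ℝ) (E ε : ℝ) : Prop :=
  ∀ z : ℂ, ∀ t ∈ Icc (0 : ℝ) 1, W z - W (t * z) ≤ E - ε * (1 - t) * ‖z‖ ^ 2

namespace HasRadialDecay

variable {W : ℂ → ℝ} {E ε : ℝ}

lemma le_add (hW : HasRadialDecay W E ε) (hε : 0 ≤ ε) (z : ℂ) : W z ≤ W 0 + E := by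
  have := hW z 0 ⟨le_rfl, zero_le_one⟩
  simp only [Complex.ofReal_zero, zero_mul, sub_zero, mul_one] at this
  nlinarith [norm_nonneg z]

lemma norm_mul_le (hW : HasRadialDecay W E ε) {g : ℂ → ℂ} {B : ℝ}
    (hB : ∀ w, ‖g w‖ * exp (W w) ≤ B * (1 + ‖w‖)) (z : ℂ) {t : ℝ}
    (ht : t ∈ Icc (0 : ℝ) 1) :
    ‖g (t * z) * z‖ ≤
      B * ‖z‖ * (1 + ‖z‖) * exp (E - W z) * exp (-(ε * ‖z‖ ^ 2 * (1 - t))) := by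
  have hB0 : 0 ≤ B := by
    simpa using (by positivity : 0 ≤ ‖g 0‖ * exp (W 0)).trans (hB 0)
  have hgt : ‖g (t * z)‖ * exp (W (t * z)) ≤ B * (1 + ‖z‖) := by
    refine (hB _).trans ?_
    rw [norm_ofReal_mul ht.1]
    gcongr
    exact mul_le_of_le_one_left (norm_nonneg z) ht.2
  have hdecay : -W (t * z) ≤ E - W z - ε * ‖z‖ ^ 2 * (1 - t) := by linarith [hW z t ht]
  calc ‖g (t * z) * z‖ = ‖g (t * z)‖ * exp (W (t * z)) * exp (-W (t * z)) * ‖z‖ := by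
        rw [norm_mul, exp_neg]; field_simp
    _ ≤ B * (1 + ‖z‖) * exp (E - W z - ε * ‖z‖ ^ 2 * (1 - t)) * ‖z‖ := by
        gcongr ?_ * _
        exact mul_le_mul hgt (exp_le_exp.2 hdecay) (exp_pos _).le (by positivity)
    _ = _ := by rw [sub_eq_add_neg (E - W z), exp_add]; ring

lemma norm_mul_exp_le (hW : HasRadialDecay W E ε) (hε : 0 < ε) {f : ℂ → ℂ}
    (hf : Differentiable ℂ f) {B : ℝ}
    (hB : ∀ w, ‖deriv f w‖ * exp (W w) ≤ B * (1 + ‖w‖)) (z : ℂ) :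
    ‖f z‖ * exp (W z) ≤ exp (W 0 + E) * ‖f 0‖ + 2 * (1 + ε⁻¹) * exp E * B := by
  set r := ‖z‖
  set I := ∫ t in (0 : ℝ)..1, exp (-(ε * r ^ 2 * (1 - t)))
  have hB0 : 0 ≤ B := by
    simpa using (by positivity : 0 ≤ ‖deriv f 0‖ * exp (W 0)).trans (hB 0)
  have hfz : ‖f z‖ ≤ ‖f 0‖ + B * r * (1 + r) * exp (E - W z) * I := by
    have := norm_sub_le_integral_of_norm_deriv_mul_le hf z (by fun_prop)
      fun t ht => hW.norm_mul_le hB z (Ioo_subset_Icc_self ht)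
    rw [integral_const_mul] at this
    linarith [norm_sub_norm_le (f z) (f 0)]
  have hexp : B * r * (1 + r) * exp (E - W z) * I * exp (W z) =
      r * (1 + r) * I * (B * exp E) := by
    rw [exp_sub]; field_simp
  calc ‖f z‖ * exp (W z) ≤ ‖f 0‖ * exp (W z) + r * (1 + r) * I * (B * exp E) := by
        rw [← hexp, ← add_mul]; gcongr
    _ ≤ exp (W 0 + E) * ‖f 0‖ + 2 * (1 + ε⁻¹) * (B * exp E) := by
        gcongr ?_ + ?_
        · rw [mul_comm]; gcongr; exact hW.le_add hε.le z
        · exact mul_le_mul_of_nonneg_right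
            (mul_one_add_mul_integral_exp_neg_le hε (norm_nonneg z)) (by positivity)
    _ = exp (W 0 + E) * ‖f 0‖ + 2 * (1 + ε⁻¹) * exp E * B := by ring

end HasRadialDecay

lemma exists_norm_mul_exp_le_of_forall_norm_ge {W : ℂ → ℝ} (hW : Continuous W) {M : ℝ}
    (hM : ∀ w, W w ≤ M) {R : ℝ} (hR : 0 < R) :
    ∃ K > 0, ∀ g : ℂ → ℂ, Differentiable ℂ g → ∀ S, 0 ≤ S →
      (∀ w, R ≤ ‖w‖ → ‖g w‖ * exp (W w) ≤ S * (1 + ‖w‖)) →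
      ∀ w, ‖g w‖ * exp (W w) ≤ K * S * (1 + ‖w‖) := by
  obtain ⟨L, hL⟩ := (isCompact_sphere (0 : ℂ) R).bddBelow_image hW.continuousOn
  refine ⟨max 1 ((1 + R) * exp (M - L)), by positivity, fun g hg S hS hfar w => ?_⟩
  have hsphere : ∀ v ∈ sphere (0 : ℂ) R, ‖g v‖ ≤ S * (1 + R) * exp (-L) := by
    intro v hv
    rw [mem_sphere_zero_iff_norm] at hv
    have hWv : L ≤ W v := hL ⟨v, by simpa using hv, rfl⟩
    calc ‖g v‖ = ‖g v‖ * exp (W v) * exp (-W v) := by rw [exp_neg]; field_simp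
      _ ≤ S * (1 + R) * exp (-L) :=
          mul_le_mul (hv ▸ hfar v hv.ge) (exp_le_exp.2 (neg_le_neg hWv)) (exp_pos _).le
            (by positivity)
  rcases le_or_gt R ‖w‖ with hw | hw
  · calc ‖g w‖ * exp (W w) ≤ S * (1 + ‖w‖) := hfar w hw
      _ ≤ max 1 ((1 + R) * exp (M - L)) * S * (1 + ‖w‖) := by
          gcongr; nth_rw 1 [← one_mul S]; gcongr; exact le_max_left _ _
  · have hball : ‖g w‖ ≤ S * (1 + R) * exp (-L) := by
      refine Complex.norm_le_of_forall_mem_frontier_norm_le isBounded_ball hg.diffContOnCl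
        (by rwa [frontier_ball _ hR.ne']) ?_
      rw [closure_ball _ hR.ne']
      exact mem_closedBall_zero_iff.2 hw.le
    calc ‖g w‖ * exp (W w) ≤ S * (1 + R) * exp (-L) * exp M := by gcongr; exact hM w
      _ = (1 + R) * exp (M - L) * S * 1 := by rw [sub_eq_add_neg, exp_add]; ring
      _ ≤ max 1 ((1 + R) * exp (M - L)) * S * (1 + ‖w‖) := by
          gcongr
          · exact le_max_right _ _
          · linarith [norm_nonneg w]

lemma continuous_psi (m : ℕ) : Continuous (psi m) := by
  unfold psi
  have : Continuous fun z : ℂ => log (1 + ‖z‖) :=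
    (continuous_const.add continuous_norm).log fun z =>
      (by positivity : (0 : ℝ) < 1 + ‖z‖).ne'
  fun_prop

lemma one_add_psi'_pos {m : ℕ} {r : ℝ} (hr : (m : ℝ) ≤ r) : 0 < 1 + psi' m r := by
  have hr0 : 0 ≤ r := (Nat.cast_nonneg m).trans hr
  have : (m : ℝ) / (1 + r) < 1 := by rw [div_lt_one (by positivity)]; linarith
  unfold psi'; linarith

lemma one_add_psi'_le (m : ℕ) {r : ℝ} (hr : 0 ≤ r) : 1 + psi' m r ≤ 1 + r := by
  unfold psi'; linarith [(by positivity : 0 ≤ (m : ℝ) / (1 + r))]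

lemma log_one_add_sub_log_one_add_le {x y : ℝ} (hy : 0 ≤ y) (hxy : y ≤ x) :
    log (1 + x) - log (1 + y) ≤ x - y := by
  rw [← log_div (by linarith) (by linarith)]
  refine (log_le_sub_one_of_pos (div_pos (by linarith) (by linarith))).trans ?_
  rw [div_sub_one (by linarith), div_le_iff₀ (by linarith)]
  nlinarith

lemma sub_le_psi_sub_psi_ofReal_mul (m : ℕ) (z : ℂ) {t : ℝ} (ht : t ∈ Icc (0 : ℝ) 1) :
    (1 - t ^ 2) * ‖z‖ ^ 2 / 2 - m * ((1 - t) * ‖z‖) ≤ psi m z - psi m (t * z) := by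
  have hlog := log_one_add_sub_log_one_add_le (mul_nonneg ht.1 (norm_nonneg z))
    (mul_le_of_le_one_left (norm_nonneg z) ht.2)
  unfold psi
  rw [norm_ofReal_mul ht.1]
  nlinarith [Nat.cast_nonneg (α := ℝ) m]

lemma re_quadratic_sub_le (A B C z : ℂ) {t : ℝ} (ht : t ∈ Icc (0 : ℝ) 1) :
    (A * z ^ 2 + B * z + C - (A * (t * z) ^ 2 + B * (t * z) + C)).re ≤
      ‖A‖ * ((1 - t ^ 2) * ‖z‖ ^ 2) + ‖B‖ * ((1 - t) * ‖z‖) := by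
  have h1t : ‖(1 : ℂ) - t‖ = 1 - t := by
    rw [← Complex.ofReal_one, ← Complex.ofReal_sub, Complex.norm_real,
      norm_of_nonneg (by linarith [ht.2])]
  have h1t2 : ‖(1 : ℂ) - t ^ 2‖ = 1 - t ^ 2 := by
    rw [← Complex.ofReal_one, ← Complex.ofReal_pow, ← Complex.ofReal_sub, Complex.norm_real,
      norm_of_nonneg (by nlinarith [ht.1, ht.2])]
  calc _ ≤ ‖A * z ^ 2 + B * z + C - (A * (t * z) ^ 2 + B * (t * z) + C)‖ :=
        Complex.re_le_norm _
    _ = ‖A * (1 - t ^ 2) * z ^ 2 + B * (1 - t) * z‖ := by ring_nf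
    _ ≤ _ := by
      refine (norm_add_le _ _).trans_eq ?_
      simp only [norm_mul, norm_pow, h1t, h1t2]; ring

lemma exists_hasRadialDecay_re_quadratic_sub_psi {A : ℂ} (hA : ‖A‖ < 1 / 2) (B C : ℂ)
    (m : ℕ) :
    ∃ E ε, 0 < ε ∧ HasRadialDecay (fun w => (A * w ^ 2 + B * w + C).re - psi m w) E ε := by
  set δ := 1 / 2 - ‖A‖
  set κ := ‖B‖ + m
  have hδ : 0 < δ := by simp only [δ]; linarith
  refine ⟨κ ^ 2 / (2 * δ), δ / 2, by positivity, fun z t ht => ?_⟩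
  have hre := re_quadratic_sub_le A B C z ht
  have hpsi := sub_le_psi_sub_psi_ofReal_mul m z ht
  rw [Complex.sub_re] at hre
  set r := ‖z‖
  have hsq : κ * r - δ * r ^ 2 / 2 ≤ κ ^ 2 / (2 * δ) := by
    have : κ ^ 2 / (2 * δ) - (κ * r - δ * r ^ 2 / 2) = (κ - δ * r) ^ 2 / (2 * δ) := by
      field_simp; ring
    linarith [this ▸ (by positivity : 0 ≤ (κ - δ * r) ^ 2 / (2 * δ))]
  have h1t : 0 ≤ 1 - t := by linarith [ht.2]
  have hsplit : ‖A‖ * ((1 - t ^ 2) * r ^ 2) + ‖B‖ * ((1 - t) * r) -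
      ((1 - t ^ 2) * r ^ 2 / 2 - m * ((1 - t) * r)) =
      -δ * (1 - t ^ 2) * r ^ 2 + κ * ((1 - t) * r) := by
    simp only [δ, κ]; ring
  have hE : 0 ≤ κ ^ 2 / (2 * δ) := by positivity
  -- `1 - t ^ 2 ≥ 1 - t` turns the bound into `(1 - t) (κ r - δ r²)`; then use `hsq`.
  nlinarith [mul_nonneg (mul_nonneg ht.1 h1t) (mul_nonneg hδ.le (sq_nonneg r)),
    mul_le_mul_of_nonneg_left hsq h1t, mul_le_mul_of_nonneg_right ht.1 hE]

/-- For g(z) = az²+bz+c and |λ| > 2|a|, there is C > 0 such that for every entire f: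
sup_z |e^{g(z)/λ} f(z)|·e^{−ψ_m(z)} ≤ C·(|f(0)| + sup_z |e^{g(z)/λ}|·|f'(z)|·e^{−ψ_m(z)}/(1+ψ_m'(|z|))). -/
theorem stmt_7 (m : ℕ) (a b c lam : ℂ) (hlam : 2 * ‖a‖ < ‖lam‖) :
    ∃ C > (0 : ℝ), ∀ f : ℂ → ℂ, Differentiable ℂ f → ∀ S : ℝ,
      (∀ w : ℂ, ‖Complex.exp ((a * w ^ 2 + b * w + c) / lam)‖ *
          ‖deriv f w‖ * Real.exp (-psi m w) / (1 + psi' m (‖w‖)) ≤ S) →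
      ∀ z : ℂ, ‖Complex.exp ((a * z ^ 2 + b * z + c) / lam) * f z‖ *
          Real.exp (-psi m z) ≤ C * (‖f 0‖ + S) := by
  have hlam0 : lam ≠ 0 := norm_pos_iff.1 ((by positivity : 0 ≤ 2 * ‖a‖).trans_lt hlam)
  have hA : ‖a / lam‖ < 1 / 2 := by
    rw [norm_div, div_lt_iff₀ (norm_pos_iff.2 hlam0)]; linarith
  set W : ℂ → ℝ := fun w => (a / lam * w ^ 2 + b / lam * w + c / lam).re - psi m w
  have hweight : ∀ w, ‖Complex.exp ((a * w ^ 2 + b * w + c) / lam)‖ * exp (-psi m w) =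
      exp (W w) := fun w => by
    have hdiv : (a * w ^ 2 + b * w + c) / lam = a / lam * w ^ 2 + b / lam * w + c / lam := by
      ring
    rw [Complex.norm_exp, ← exp_add, ← sub_eq_add_neg, hdiv]
  obtain ⟨E, ε, hε, hdecay : HasRadialDecay W E ε⟩ :=
    exists_hasRadialDecay_re_quadratic_sub_psi hA (b / lam) (c / lam) m
  obtain ⟨K, hK, hdisc⟩ := exists_norm_mul_exp_le_of_forall_norm_ge (W := W)
    ((Complex.continuous_re.comp (by fun_prop)).sub (continuous_psi m))
    (hdecay.le_add hε.le) (R := m + 1) (by positivity)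
  refine ⟨exp (W 0 + E) + 2 * (1 + ε⁻¹) * exp E * K, by positivity, fun f hf S hS z => ?_⟩
  have hS0 : 0 ≤ S := by
    have hm : (m : ℝ) ≤ ‖(m : ℂ)‖ := by simp
    exact (div_nonneg (by positivity) (one_add_psi'_pos hm).le).trans (hS m)
  have hfar : ∀ w : ℂ, (m : ℝ) + 1 ≤ ‖w‖ →
      ‖deriv f w‖ * exp (W w) ≤ S * (1 + ‖w‖) := by
    intro w hw
    have := (div_le_iff₀ (one_add_psi'_pos (by linarith))).1 (hS w)
    have := mul_le_mul_of_nonneg_left (one_add_psi'_le m (norm_nonneg w)) hS0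
    rw [← hweight]; linarith
  have key := hdecay.norm_mul_exp_le hε hf (hdisc _ hf.deriv S hS0 hfar) z
  rw [norm_mul, mul_right_comm, hweight, mul_comm]
  refine key.trans ?_
  have := mul_nonneg (exp_pos (W 0 + E)).le hS0
  have := mul_nonneg (by positivity : 0 ≤ 2 * (1 + ε⁻¹) * exp E * K) (norm_nonneg (f 0))
  linarith
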